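/- arXiv:math/0108159 — 3 statements merged into one kernel-verified Lean document; each statement's English description precedes it below -/
import Mathlib

section
/- Let f be a holomorphic function near x ∈ ℂⁿ with f(x) = 0, f ≢ 0, and let m be the vanishing order of f at x (the least total degree occurring in the Taylor expansion of f at x). Then the Lelong number of u = log|f| at x equals m. -/
open MeasureTheory Filter Metric Set Topology
open scoped ENNReal Topology

noncomputable section

/-- `ℂⁿ` with the Euclidean norm. -/
abbrev Cn (n : ℕ) := EuclideanSpace ℂ (Fin n)

noncomputable instance (n : ℕ) : MeasurableSpace (Cn n) := borel _
instance (n : ℕ) : BorelSpace (Cn n) := ⟨rfl⟩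
noncomputable instance (n : ℕ) : InnerProductSpace ℝ (Cn n) :=
  InnerProductSpace.rclikeToReal ℂ _

/-- The truncation of an extended real number to `ℝ≥0∞`. -/
def EReal.toENNReal' (x : EReal) : ℝ≥0∞ :=
  if x = ⊤ then ⊤ else ENNReal.ofReal x.toReal

/-- The mean value of an `EReal`-valued function with respect to a measure `μ`,
defined via truncation from above:  for any real upper bound `C` of `f`, the mean is
`C - (∫ (C - f) dμ) / μ(univ)`; we take the infimum over all such bounds. -/
def erealAvg {α : Type*} [MeasurableSpace α] (μ : Measure α) (f : α → EReal) : EReal :=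
  ⨅ C : {C : ℝ // ∀ a, f a ≤ (C : EReal)},
    ((C : ℝ) : EReal) -
      (((∫⁻ a, ((((C : ℝ) : EReal)) - f a).toENNReal' ∂μ) / μ Set.univ : ℝ≥0∞) : EReal)

/-- A function `u` with values in `[-∞, ∞)` is plurisubharmonic on `Ω` if it is upper
semicontinuous on `Ω`, never takes the value `+∞`, and its restriction to every complex line
satisfies the sub-mean value inequality on every circle (together with its disc) contained
in `Ω`. -/
def Plurisubharmonic {E : Type*} [NormedAddCommGroup E] [NormedSpace ℂ E]
    (Ω : Set E) (u : E → EReal) : Prop :=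
  UpperSemicontinuousOn u Ω ∧ (∀ z, u z ≠ ⊤) ∧
  ∀ (x y : E) (r : ℝ), 0 < r →
    (∀ ζ : ℂ, ‖ζ‖ ≤ r → x + ζ • y ∈ Ω) →
    u x ≤ erealAvg (volume.restrict (Set.Ioc (0:ℝ) (2 * Real.pi)))
      (fun θ : ℝ => u (x + ((r : ℂ) * Complex.exp (θ * Complex.I)) • y))

/-- `Λ(u,x,t)`: the supremum of `u` over the ball of radius `e^t` centered at `x`. -/
def supBall {E : Type*} [NormedAddCommGroup E] (u : E → EReal) (x : E) (t : ℝ) : EReal :=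
  sSup (u '' ball x (Real.exp t))

/-- `λ(u,x,t)`: the mean of `u` over the sphere of radius `e^t` centered at `x`,
with respect to the normalized surface measure. -/
def sphereMean {n : ℕ} (u : Cn n → EReal) (x : Cn n) (t : ℝ) : EReal :=
  erealAvg ((volume : Measure (Cn n)).toSphere)
    (fun z : sphere (0 : Cn n) 1 => u (x + Real.exp t • (z : Cn n)))

/-- The Lelong number of `u` at `x` is `ν`:  `Λ(u,x,t)/t → ν` as `t → -∞`. -/
def HasLelongNumber {E : Type*} [NormedAddCommGroup E] (u : E → EReal) (x : E) (ν : EReal) : Prop :=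
  Tendsto (fun t : ℝ => ((t⁻¹ : ℝ) : EReal) * supBall u x t) atBot (𝓝 ν)

/-- Convexity (on a subset of `ℝ`) for `EReal`-valued functions. -/
def ERealConvexOn (s : Set ℝ) (f : ℝ → EReal) : Prop :=
  ∀ ⦃t₁⦄, t₁ ∈ s → ∀ ⦃t₂⦄, t₂ ∈ s → ∀ ⦃a b : ℝ⦄, 0 ≤ a → 0 ≤ b → a + b = 1 →
    f (a * t₁ + b * t₂) ≤ (a : EReal) * f t₁ + (b : EReal) * f t₂

/-- `Λ(u,x,ta)`: the supremum of `u` over the closed polydisc with polyradius `e^{t a}`. -/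
def supPoly {n : ℕ} (u : Cn n → EReal) (x : Cn n) (a : Fin n → ℝ) (t : ℝ) : EReal :=
  sSup (u '' {z : Cn n | ∀ k, ‖z k - x k‖ ≤ Real.exp (t * a k)})

/-- The directional Lelong number of `u` at `x` in the direction `a` is `ν`. -/
def HasDirLelongNumber {n : ℕ} (u : Cn n → EReal) (x : Cn n) (a : Fin n → ℝ) (ν : EReal) : Prop :=
  Tendsto (fun t : ℝ => ((t⁻¹ : ℝ) : EReal) * supPoly u x a t) atBot (𝓝 ν)

section LelongHelpers

open Function

variable {E F : Type} [NormedAddCommGroup E] [NormedSpace ℂ E]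
  [NormedAddCommGroup F] [NormedSpace ℂ F]

/-- Tail bound: if the diagonal coefficients of the power series vanish below `m`,
then `f (x+w) = O(‖w‖^m)`. -/
lemma lemA {p : FormalMultilinearSeries ℂ E F} {f : E → F} {x : E} {r : ℝ≥0∞}
    (h : HasFPowerSeriesOnBall f p x r) (m : ℕ)
    (hd : ∀ k < m, ∀ y : E, p k (fun _ => y) = 0) :
    ∃ C > 0, ∃ δ > 0, ∀ w : E, ‖w‖ < δ → ‖f (x + w)‖ ≤ C * ‖w‖ ^ m := by
  -- choose a positive real radius below r and below p.radius
  obtain ⟨r', hr'0, hr'r⟩ := ENNReal.lt_iff_exists_nnreal_btwn.1 h.r_pos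
  have hr'rad : (r' : ℝ≥0∞) < p.radius := hr'r.trans_le h.r_le
  obtain ⟨a, ⟨ha0, ha1⟩, C, hC, hbound⟩ := p.norm_mul_pow_le_mul_pow_of_lt_radius hr'rad
  have hr'pos : (0:ℝ) < r' := by exact_mod_cast hr'0
  have h1a : (0:ℝ) < 1 - a := by linarith
  refine ⟨C * (1 - a)⁻¹ / (r':ℝ) ^ m, by positivity, r', hr'pos, fun w hw => ?_⟩
  have hwball : w ∈ Metric.eball (0:E) r := by
    rw [EMetric.mem_ball, edist_zero_right]
    exact lt_trans (by exact_mod_cast (show (‖w‖₊ : ℝ≥0∞) < r' by exact_mod_cast hw)) hr'r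
  have hsum := h.hasSum hwball
  have hterm : ∀ k, ‖p k (fun _ => w)‖ ≤ (C * (‖w‖ / r') ^ m) * a ^ k := by
    intro k
    rcases lt_or_ge k m with hk | hk
    · rw [hd k hk w]
      have : (0:ℝ) ≤ (C * (‖w‖ / r') ^ m) * a ^ k := by positivity
      simpa using this
    · calc ‖p k (fun _ => w)‖ ≤ ‖p k‖ * ∏ _i : Fin k, ‖w‖ := (p k).le_opNorm _
        _ = (‖p k‖ * (r':ℝ) ^ k) * (‖w‖ / r') ^ k := by
            rw [Finset.prod_const]
            simp only [Finset.card_univ, Fintype.card_fin]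
            rw [div_pow]
            field_simp
        _ ≤ (C * a ^ k) * (‖w‖ / r') ^ k := by
            apply mul_le_mul_of_nonneg_right (hbound k)
            positivity
        _ ≤ (C * a ^ k) * (‖w‖ / r') ^ m := by
            apply mul_le_mul_of_nonneg_left _ (by positivity)
            apply pow_le_pow_of_le_one (by positivity) _ hk
            rw [div_le_one hr'pos]
            exact hw.le
        _ = (C * (‖w‖ / r') ^ m) * a ^ k := by ring
  have hsummable : Summable fun k => ‖p k (fun _ => w)‖ := by
    apply Summable.of_nonneg_of_le (fun k => norm_nonneg _) hterm
    exact (summable_geometric_of_lt_one ha0.le ha1).mul_left _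
  calc ‖f (x + w)‖ = ‖∑' k, p k (fun _ => w)‖ := by rw [hsum.tsum_eq]
    _ ≤ ∑' k, ‖p k (fun _ => w)‖ := norm_tsum_le_tsum_norm hsummable
    _ ≤ ∑' k, (C * (‖w‖ / r') ^ m) * a ^ k := by
        exact Summable.tsum_le_tsum hterm hsummable ((summable_geometric_of_lt_one ha0.le ha1).mul_left _)
    _ = (C * (‖w‖ / r') ^ m) * (1 - a)⁻¹ := by
        rw [tsum_mul_left, tsum_geometric_of_lt_one ha0.le ha1]
    _ = C * (1 - a)⁻¹ / (r':ℝ) ^ m * ‖w‖ ^ m := by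
        rw [div_pow]; ring

lemma lemQ {E : Type} [NormedAddCommGroup E] [NormedSpace ℂ E] :
    ∀ (m : ℕ) {F : Type} [NormedAddCommGroup F] [NormedSpace ℂ F] [CompleteSpace F]
    (f : E → F) (x : E) (ε C : ℝ), 0 < ε → 0 ≤ C →
    (∀ z ∈ ball x ε, AnalyticAt ℂ f z) →
    (∀ w : E, ‖w‖ < ε → ‖f (x + w)‖ ≤ C * ‖w‖ ^ (m + 1)) →
    iteratedFDeriv ℂ m f x = 0 := by
  intro m
  induction m with
  | zero =>
    intro F _ _ _ f x ε C hε hC hf hb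
    have hfx : f x = 0 := by
      have := hb 0 (by simpa using hε)
      simpa using this
    ext v
    simp [iteratedFDeriv_zero_apply, hfx]
  | succ m ih =>
    intro F _ _ _ f x ε C hε hC hf hb
    set g := fderiv ℂ f with hgdef
    have hg : ∀ z ∈ ball x (ε/4), AnalyticAt ℂ g z := fun z hz =>
      (hf z (ball_subset_ball (by linarith) hz)).fderiv
    have hgb : ∀ w : E, ‖w‖ < ε/4 → ‖g (x + w)‖ ≤ (C * 2 ^ (m + 2)) * ‖w‖ ^ (m + 1) := by
      intro w hw
      have hxw : x + w ∈ ball x ε := by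
        simp only [mem_ball, dist_self_add_left]
        linarith
      apply ContinuousLinearMap.opNorm_le_bound _ (by positivity)
      intro y
      rcases eq_or_ne y 0 with rfl | hy
      · simp
      have hy0 : (0:ℝ) < ‖y‖ := norm_pos_iff.2 hy
      have key : ∀ σ : ℝ, 0 < σ → σ < ε/4 →
          ‖g (x + w) y‖ ≤ C * 2 ^ (m + 2) * (‖w‖ + σ) ^ (m + 1) * ‖y‖ := by
        intro σ hσ hσε
        set ρ := (‖w‖ + σ) / ‖y‖ with hρdef
        have hρpos : 0 < ρ := div_pos (by positivity) hy0
        set φ := fun ζ : ℂ => f (x + w + ζ • y) with hφdef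
        have hmem : ∀ ζ : ℂ, ‖ζ‖ ≤ ρ → ‖w + ζ • y‖ ≤ 2 * ‖w‖ + σ := by
          intro ζ hζ
          calc ‖w + ζ • y‖ ≤ ‖w‖ + ‖ζ • y‖ := norm_add_le _ _
            _ = ‖w‖ + ‖ζ‖ * ‖y‖ := by rw [norm_smul]
            _ ≤ ‖w‖ + ρ * ‖y‖ := by nlinarith
            _ = 2 * ‖w‖ + σ := by rw [hρdef]; field_simp; ring
        have hmem' : ∀ ζ : ℂ, ‖ζ‖ ≤ ρ → x + w + ζ • y ∈ ball x ε := by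
          intro ζ hζ
          have := hmem ζ hζ
          simp only [mem_ball, add_assoc, dist_self_add_left]
          calc ‖w + ζ • y‖ ≤ 2 * ‖w‖ + σ := this
            _ < ε := by linarith
        have hline : ∀ ζ : ℂ, HasDerivAt (fun ζ : ℂ => x + w + ζ • y) y ζ := by
          intro ζ
          have h1 : HasDerivAt (fun ζ : ℂ => ζ • y) y ζ := by
            simpa using (hasDerivAt_id ζ).smul_const y
          simpa using h1.const_add (x + w)
        have hφd : DiffContOnCl ℂ φ (ball (0:ℂ) ρ) := by
          apply DifferentiableOn.diffContOnCl
          intro ζ hζ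
          have hζ' : ‖ζ‖ ≤ ρ := by
            rw [closure_ball _ hρpos.ne'] at hζ
            simpa [dist_eq_norm] using hζ
          exact (((hf _ (hmem' ζ hζ')).differentiableAt.comp ζ
            (hline ζ).differentiableAt)).differentiableWithinAt
        have hsphere : ∀ z ∈ sphere (0:ℂ) ρ, ‖φ z‖ ≤ C * (2 * (‖w‖ + σ)) ^ (m + 2) := by
          intro ζ hζ
          have hζρ : ‖ζ‖ = ρ := by simpa [dist_eq_norm] using hζ
          have h1 : ‖w + ζ • y‖ ≤ 2 * ‖w‖ + σ := hmem ζ hζρ.le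
          have h2 : ‖w + ζ • y‖ < ε := by linarith
          have := hb (w + ζ • y) h2
          rw [hφdef]
          simp only [add_assoc]
          refine le_trans (by simpa [add_assoc] using this) ?_
          have : ‖w + ζ • y‖ ^ (m+2) ≤ (2 * (‖w‖ + σ)) ^ (m+2) :=
            pow_le_pow_left₀ (norm_nonneg _) (by linarith) _
          nlinarith [pow_nonneg (norm_nonneg (w + ζ • y)) (m+2)]
        have hderiv : deriv φ 0 = g (x + w) y := by
          have h2 : HasFDerivAt f (g (x + w)) (x + w) :=
            (hf _ hxw).differentiableAt.hasFDerivAt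
          have h2' : HasFDerivAt f (g (x + w)) (x + w + (0:ℂ) • y) := by simpa using h2
          have := h2'.comp_hasDerivAt (0:ℂ) (hline 0)
          exact this.deriv
        have := Complex.norm_deriv_le_of_forall_mem_sphere_norm_le hρpos hφd hsphere
        rw [hderiv] at this
        calc ‖g (x + w) y‖ ≤ C * (2 * (‖w‖ + σ)) ^ (m + 2) / ρ := this
          _ = C * 2 ^ (m + 2) * (‖w‖ + σ) ^ (m + 1) * ‖y‖ := by
              have hws : ‖w‖ + σ ≠ 0 := by positivity
              rw [hρdef, mul_pow, div_div_eq_mul_div, div_eq_iff hws]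
              ring
      have hlim : Tendsto (fun σ : ℝ => C * 2 ^ (m + 2) * (‖w‖ + σ) ^ (m + 1) * ‖y‖)
          (𝓝[>] (0:ℝ)) (𝓝 (C * 2 ^ (m + 2) * ‖w‖ ^ (m + 1) * ‖y‖)) := by
        have hcont : Continuous (fun σ : ℝ => C * 2 ^ (m + 2) * (‖w‖ + σ) ^ (m + 1) * ‖y‖) :=
          (continuous_const.mul ((continuous_const.add continuous_id).pow (m + 1))).mul
            continuous_const
        have h2 := (hcont.tendsto 0).mono_left (nhdsWithin_le_nhds (s := Set.Ioi (0:ℝ)))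
        simpa using h2
      refine ge_of_tendsto hlim ?_
      filter_upwards [Ioo_mem_nhdsGT_of_mem (by constructor <;> [exact le_rfl; linarith] :
        (0:ℝ) ∈ Ico (0:ℝ) (ε/4))] with σ hσ
      exact key σ hσ.1 hσ.2
    have h0 : iteratedFDeriv ℂ m g x = 0 :=
      ih g x (ε/4) (C * 2 ^ (m + 2)) (by linarith) (by positivity) hg hgb
    ext v
    rw [iteratedFDeriv_succ_apply_right]
    change (iteratedFDeriv ℂ m g x) (Fin.init v) (v (Fin.last m)) = _
    rw [h0]
    simp

lemma lemP [CompleteSpace F] {p : FormalMultilinearSeries ℂ E F} {f : E → F} {x : E} {r : ℝ≥0∞}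
    (h : HasFPowerSeriesOnBall f p x r) (m : ℕ)
    (hd : ∀ k ≤ m, ∀ y : E, p k (fun _ => y) = 0) :
    iteratedFDeriv ℂ m f x = 0 := by
  obtain ⟨C, hC, δ, hδ, hb⟩ := lemA h (m + 1) (fun k hk => hd k (Nat.lt_succ_iff.mp hk))
  obtain ⟨r', hr'0, hr'r⟩ := ENNReal.lt_iff_exists_nnreal_btwn.1 h.r_pos
  have hr'pos : (0:ℝ) < r' := by exact_mod_cast hr'0
  set ε : ℝ := min δ r' with hε
  have hεpos : 0 < ε := lt_min hδ hr'pos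
  apply lemQ m f x ε C hεpos hC.le
  · intro z hz
    apply h.analyticAt_of_mem
    rw [EMetric.mem_ball, edist_dist]
    calc ENNReal.ofReal (dist z x) < ENNReal.ofReal r' :=
          (ENNReal.ofReal_lt_ofReal_iff hr'pos).2 ((mem_ball.1 hz).trans_le (min_le_right _ _))
      _ = (r' : ℝ≥0∞) := ENNReal.ofReal_coe_nnreal
      _ < r := hr'r
  · exact fun w hw => hb w (hw.trans_le (min_le_left _ _))

/-- Lower bound along a line where the `m`-th diagonal coefficient doesn't vanish. -/
lemma lemL {p : FormalMultilinearSeries ℂ E ℂ} {f : E → ℂ} {x : E} {r : ℝ≥0∞}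
    (h : HasFPowerSeriesOnBall f p x r) (m : ℕ) (y : E)
    (hc : p m (fun _ => y) ≠ 0) (hd : ∀ k < m, p k (fun _ => y) = 0) :
    ∃ c > 0, ∃ δ > 0, ∀ ζ : ℂ, ‖ζ‖ < δ → c * ‖ζ‖ ^ m ≤ ‖f (x + ζ • y)‖ := by
  classical
  set q : FormalMultilinearSeries ℂ ℂ ℂ :=
    FormalMultilinearSeries.ofScalars ℂ (fun k => p k (fun _ => y)) with hqdef
  set g : ℂ → ℂ := fun ζ => f (x + ζ • y) with hgdef
  have hqcoeff : ∀ k, q.coeff k = p k (fun _ => y) := by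
    intro k
    simp [hqdef, FormalMultilinearSeries.coeff, FormalMultilinearSeries.ofScalars,
      ContinuousMultilinearMap.mkPiAlgebraFin_apply, List.prod_ofFn]
  obtain ⟨r', hr'0, hr'r⟩ := ENNReal.lt_iff_exists_nnreal_btwn.1 h.r_pos
  have hr'pos : (0:ℝ) < r' := by exact_mod_cast hr'0
  have hq : HasFPowerSeriesAt g q 0 := by
    rw [hasFPowerSeriesAt_iff]
    have hδpos : (0:ℝ) < r' / (‖y‖ + 1) := by positivity
    filter_upwards [Metric.ball_mem_nhds (0:ℂ) hδpos] with ζ hζ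
    have hζn : ‖ζ‖ * ‖y‖ < r' := by
      rw [mem_ball, dist_zero_right] at hζ
      have h1 : ‖ζ‖ * ‖y‖ < r' / (‖y‖ + 1) * (‖y‖ + 1) := by
        rcases eq_or_lt_of_le (norm_nonneg ζ) with h0 | h0
        · rw [← h0]; simpa using (by positivity : (0:ℝ) < r' / (‖y‖ + 1) * (‖y‖ + 1))
        · apply mul_lt_mul' hζ.le _ (norm_nonneg y) (by positivity)
          linarith [norm_nonneg y]
      rwa [div_mul_cancel₀] at h1
      positivity
    have hmem : ζ • y ∈ Metric.eball (0:E) r := by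
      rw [EMetric.mem_ball, edist_zero_right]
      calc (‖ζ • y‖₊ : ℝ≥0∞) < (r' : ℝ≥0∞) := by
            rw [← ENNReal.ofReal_coe_nnreal, ← ENNReal.ofReal_coe_nnreal]
            exact (ENNReal.ofReal_lt_ofReal_iff hr'pos).2 (by simpa [norm_smul] using hζn)
        _ < r := hr'r
    have hsum := h.hasSum hmem
    have heq : ∀ k : ℕ, p k (fun _ => ζ • y) = ζ ^ k • q.coeff k := by
      intro k
      rw [hqcoeff k]
      have := (p k).toMultilinearMap.map_smul_univ (fun _ : Fin k => ζ) (fun _ => y)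
      simpa [Finset.prod_const] using this
    rw [show g (0 + ζ) = f (x + ζ • y) by simp [hgdef]]
    convert hsum using 1
    ext k
    rw [heq k]
  have hqm : q m ≠ 0 := by
    rw [hqdef]
    exact fun hz => hc ((FormalMultilinearSeries.ofScalars_eq_zero ℂ m).mp hz)
  have hq0 : q ≠ 0 := fun hz => hqm (by rw [hz]; rfl)
  have horder : q.order = m := by
    rw [FormalMultilinearSeries.order_eq_find' hq0, Nat.find_eq_iff]
    refine ⟨hqm, fun k hk => ?_⟩
    simp only [not_not]
    exact FormalMultilinearSeries.ofScalars_eq_zero_of_scalar_zero ℂ (hd k hk)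
  have hfact := hq.eq_pow_order_mul_iterate_dslope
  have hne := hq.iterate_dslope_fslope_ne_zero hq0
  have hcont := (hq.has_fpower_series_iterate_dslope_fslope q.order).continuousAt
  set c₀ : ℝ := ‖(swap dslope 0)^[q.order] g 0‖ with hc₀
  have hc₀pos : 0 < c₀ := norm_pos_iff.2 hne
  have hev : ∀ᶠ ζ in 𝓝 (0:ℂ), c₀ / 2 < ‖(swap dslope 0)^[q.order] g ζ‖ := by
    have h1 : Tendsto (fun ζ => ‖(swap dslope 0)^[q.order] g ζ‖) (𝓝 0) (𝓝 c₀) :=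
      hcont.norm
    exact h1.eventually (eventually_gt_nhds (by linarith))
  have hboth := (Filter.Eventually.of_forall hfact).and hev
  rw [Metric.eventually_nhds_iff] at hboth
  obtain ⟨δ, hδpos, hδ⟩ := hboth
  refine ⟨c₀ / 2, by linarith, δ, hδpos, fun ζ hζ => ?_⟩
  obtain ⟨h1, h2⟩ := hδ (show dist ζ 0 < δ by simpa [dist_zero_right] using hζ)
  have : g ζ = ζ ^ m • (swap dslope 0)^[q.order] g ζ := by
    rw [← horder]; simpa using h1
  calc c₀ / 2 * ‖ζ‖ ^ m ≤ ‖(swap dslope 0)^[q.order] g ζ‖ * ‖ζ‖ ^ m := by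
        apply mul_le_mul_of_nonneg_right h2.le (by positivity)
    _ = ‖g ζ‖ := by
        rw [this, norm_smul, norm_pow]; ring
    _ = ‖f (x + ζ • y)‖ := rfl

end LelongHelpers

set_option maxHeartbeats 1000000 in
/-- If `f` is holomorphic near `x`, `f(x) = 0`, `f ≢ 0`, and `m` is the
vanishing order of `f` at `x` (the least `k` with nonvanishing `k`-th derivative), then the
Lelong number of `log|f|` at `x` equals `m`. -/
theorem statement6 {n : ℕ} (Ω : Set (Cn n)) (hΩ : IsOpen Ω)
    (f : Cn n → ℂ) (hf : ∀ z ∈ Ω, AnalyticAt ℂ f z)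
    (x : Cn n) (hx : x ∈ Ω) (hfx : f x = 0) (m : ℕ)
    (hm : iteratedFDeriv ℂ m f x ≠ 0) (hm' : ∀ k < m, iteratedFDeriv ℂ k f x = 0) :
    HasLelongNumber
      (fun z => if f z = 0 then (⊥ : EReal)
        else ((Real.log ‖f z‖ : ℝ) : EReal))
      x ((m : ℝ) : EReal) := by
  obtain ⟨p, hp⟩ := hf x hx
  obtain ⟨r, h⟩ := hp
  set u : Cn n → EReal := fun z => if f z = 0 then (⊥ : EReal)
    else ((Real.log ‖f z‖ : ℝ) : EReal) with hu
  have hm0 : 0 < m := by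
    rcases Nat.eq_zero_or_pos m with rfl | h'
    · exfalso; apply hm; ext v; simp [iteratedFDeriv_zero_apply, hfx]
    · exact h'
  have hd : ∀ k < m, ∀ y : Cn n, p k (fun _ => y) = 0 := by
    intro k hk y
    have h1 := h.factorial_smul y k
    rw [hm' k hk] at h1
    simp only [ContinuousMultilinearMap.zero_apply] at h1
    have h2 : ((k.factorial : ℂ)) * (p k fun _ => y) = 0 := by rw [← nsmul_eq_mul]; exact h1
    rcases mul_eq_zero.1 h2 with h3 | h3
    · exact absurd h3 (Nat.cast_ne_zero.2 (Nat.factorial_ne_zero k))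
    · exact h3
  have hdy : ∃ y : Cn n, p m (fun _ => y) ≠ 0 := by
    by_contra hco
    push_neg at hco
    apply hm
    apply lemP h m
    intro k hk y
    rcases hk.lt_or_eq with hlt | rfl
    · exact hd k hlt y
    · exact hco y
  obtain ⟨y, hcy⟩ := hdy
  have hy0 : y ≠ 0 := by
    rintro rfl
    exact hcy ((p m).map_coord_zero ⟨0, hm0⟩ rfl)
  have hyn : 0 < ‖y‖ := norm_pos_iff.2 hy0
  obtain ⟨C, hC, δ₂, hδ₂, hup⟩ := lemA h m hd
  obtain ⟨c, hc, δ₁, hδ₁, hlow⟩ := lemL h m y hcy (fun k hk => hd k hk y)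
  set c₂ : ℝ := c / (2 * ‖y‖) ^ m with hc₂def
  have hc₂ : 0 < c₂ := by positivity
  set A : ℝ := Real.log c₂ with hA
  set B : ℝ := Real.log C with hB
  have hev : ∀ᶠ t : ℝ in atBot,
      Real.exp t < δ₂ ∧ Real.exp t / (2 * ‖y‖) < δ₁ ∧ t < 0 := by
    have h1 : Tendsto Real.exp atBot (𝓝 0) := Real.tendsto_exp_atBot
    have e1 : ∀ᶠ t : ℝ in atBot, Real.exp t < δ₂ := h1.eventually_lt_const hδ₂
    have e2 : ∀ᶠ t : ℝ in atBot, Real.exp t / (2 * ‖y‖) < δ₁ := by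
      have h2 : Tendsto (fun t => Real.exp t / (2 * ‖y‖)) atBot (𝓝 (0 / (2 * ‖y‖))) :=
        h1.div_const _
      rw [zero_div] at h2
      exact h2.eventually_lt_const hδ₁
    exact e1.and (e2.and (eventually_lt_atBot 0))
  have hbound : ∀ t : ℝ, Real.exp t < δ₂ → Real.exp t / (2 * ‖y‖) < δ₁ →
      ((m * t + A : ℝ) : EReal) ≤ supBall u x t ∧
        supBall u x t ≤ ((m * t + B : ℝ) : EReal) := by
    intro t h1 h2
    have hexp : 0 < Real.exp t := Real.exp_pos t
    constructor
    · -- lower bound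
      set ζt : ℂ := ((Real.exp t / (2 * ‖y‖) : ℝ) : ℂ) with hζt
      have hζn : ‖ζt‖ = Real.exp t / (2 * ‖y‖) := by
        rw [hζt, Complex.norm_real, Real.norm_of_nonneg (by positivity)]
      set z₀ : Cn n := x + ζt • y with hz₀def
      have hz₀ : z₀ ∈ ball x (Real.exp t) := by
        rw [hz₀def, mem_ball, dist_self_add_left, norm_smul, hζn]
        rw [div_mul_eq_mul_div, mul_comm]
        rw [div_lt_iff₀ (by positivity)]
        nlinarith [hexp, hyn]
      have hfl : c * ‖ζt‖ ^ m ≤ ‖f z₀‖ := hlow ζt (by rw [hζn]; exact h2)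
      have hflpos : 0 < ‖f z₀‖ := lt_of_lt_of_le (by rw [hζn]; positivity) hfl
      have hfne : f z₀ ≠ 0 := norm_pos_iff.1 hflpos
      have huz : u z₀ = ((Real.log ‖f z₀‖ : ℝ) : EReal) := by
        rw [hu]; simp only [if_neg hfne]
      have hreal : m * t + A ≤ Real.log ‖f z₀‖ := by
        have habs : ‖f z₀‖ = ‖f z₀‖ := rfl
        rw [habs]
        have hcalc : c * ‖ζt‖ ^ m = c₂ * Real.exp t ^ m := by
          rw [hζn, hc₂def, div_pow]; ring
        have hlog : Real.log (c₂ * Real.exp t ^ m) = m * t + A := by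
          rw [Real.log_mul hc₂.ne' (by positivity), Real.log_pow, Real.log_exp]
          push_cast; ring
        calc m * t + A = Real.log (c₂ * Real.exp t ^ m) := hlog.symm
          _ ≤ Real.log ‖f z₀‖ := by
              apply Real.log_le_log (by positivity)
              rw [← hcalc]; exact hfl
      refine le_trans ?_ (le_sSup ⟨z₀, hz₀, rfl⟩)
      rw [huz]
      exact_mod_cast EReal.coe_le_coe_iff.2 hreal
    · -- upper bound
      apply sSup_le
      rintro v ⟨z, hz, rfl⟩
      by_cases hfz : f z = 0
      · rw [hu]; simp only [if_pos hfz]; exact bot_le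
      rw [hu]; simp only [if_neg hfz]
      apply EReal.coe_le_coe_iff.2
      have hwn : ‖z - x‖ < Real.exp t := by rw [← dist_eq_norm]; exact hz
      have hupz : ‖f z‖ ≤ C * ‖z - x‖ ^ m := by
        have := hup (z - x) (hwn.trans h1)
        rwa [add_sub_cancel] at this
      have hwpos : 0 < ‖z - x‖ := by
        rw [norm_pos_iff, sub_ne_zero]
        rintro rfl
        exact hfz hfx
      have habs : ‖f z‖ = ‖f z‖ := rfl
      rw [habs]
      have hfzpos : 0 < ‖f z‖ := norm_pos_iff.2 hfz
      calc Real.log ‖f z‖ ≤ Real.log (C * ‖z - x‖ ^ m) := Real.log_le_log hfzpos hupz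
        _ = Real.log C + m * Real.log ‖z - x‖ := by
            rw [Real.log_mul hC.ne' (by positivity), Real.log_pow]
        _ ≤ Real.log C + m * t := by
            have hlt : Real.log ‖z - x‖ ≤ t := by
              calc Real.log ‖z - x‖ ≤ Real.log (Real.exp t) := Real.log_le_log hwpos hwn.le
                _ = t := Real.log_exp t
            nlinarith [hlt, Nat.cast_nonneg (α := ℝ) m]
        _ = m * t + B := by rw [hB]; ring
  -- final limit computation
  have key : ∀ᶠ t : ℝ in atBot,
      ((t⁻¹ : ℝ) : EReal) * supBall u x t = (((t⁻¹ * (supBall u x t).toReal : ℝ)) : EReal) ∧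
      m * t + A ≤ (supBall u x t).toReal ∧ (supBall u x t).toReal ≤ m * t + B ∧ t < 0 := by
    filter_upwards [hev] with t ht
    obtain ⟨h1, h2, h3⟩ := ht
    obtain ⟨hl, hr⟩ := hbound t h1 h2
    have hTop : supBall u x t ≠ ⊤ := ne_top_of_le_ne_top (EReal.coe_ne_top _) hr
    have hBot : supBall u x t ≠ ⊥ := ne_bot_of_le_ne_bot (EReal.coe_ne_bot _) hl
    refine ⟨?_, ?_, ?_, h3⟩
    · rw [EReal.coe_mul, EReal.coe_toReal hTop hBot]
    · have := EReal.toReal_le_toReal hl (EReal.coe_ne_bot _) hTop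
      rwa [EReal.toReal_coe] at this
    · have := EReal.toReal_le_toReal hr hBot (EReal.coe_ne_top _)
      rwa [EReal.toReal_coe] at this
  have hreal : Tendsto (fun t : ℝ => t⁻¹ * (supBall u x t).toReal) atBot (𝓝 (m : ℝ)) := by
    have hinv0 : Tendsto (fun t : ℝ => t⁻¹) atBot (𝓝 (0:ℝ)) := by
      have hcomp : Tendsto (fun t : ℝ => (-t)⁻¹) atBot (𝓝 (0:ℝ)) :=
        tendsto_inv_atTop_zero.comp tendsto_neg_atBot_atTop
      have hneg := hcomp.neg
      simp only [inv_neg, neg_neg, neg_zero] at hneg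
      exact hneg
    have hAt : Tendsto (fun t : ℝ => (m : ℝ) + A * t⁻¹) atBot (𝓝 ((m : ℝ) + A * 0)) :=
      tendsto_const_nhds.add (hinv0.const_mul A)
    have hBt : Tendsto (fun t : ℝ => (m : ℝ) + B * t⁻¹) atBot (𝓝 ((m : ℝ) + B * 0)) :=
      tendsto_const_nhds.add (hinv0.const_mul B)
    rw [mul_zero, add_zero] at hAt hBt
    apply tendsto_of_tendsto_of_tendsto_of_le_of_le' hBt hAt
    · filter_upwards [key] with t ⟨_, hlo, hhi, ht0⟩
      have htne : t ≠ 0 := ht0.ne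
      have heq : t⁻¹ * (m * t + B) = (m : ℝ) + B * t⁻¹ := by field_simp; try ring
      rw [← heq]
      have hinv : t⁻¹ ≤ 0 := by
        apply inv_nonpos.2 ht0.le
      exact mul_le_mul_of_nonpos_left hhi hinv
    · filter_upwards [key] with t ⟨_, hlo, hhi, ht0⟩
      have htne : t ≠ 0 := ht0.ne
      have heq : t⁻¹ * (m * t + A) = (m : ℝ) + A * t⁻¹ := by field_simp; try ring
      rw [← heq]
      have hinv : t⁻¹ ≤ 0 := inv_nonpos.2 ht0.le
      exact mul_le_mul_of_nonpos_left hlo hinv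
  have hfin := EReal.tendsto_coe.2 hreal
  apply Tendsto.congr' _ hfin
  filter_upwards [key] with t ⟨heq, _, _, _⟩
  exact heq.symm
end
end

section
/- Let f = (f₁,…,f_m) be a holomorphic mapping near x ∈ ℂⁿ with f(x) = 0 and each f_k ≢ 0, and let m_k be the vanishing order of f_k at x. Then the Lelong number of u = log|f| = ½ log(∑_k |f_k|²) at x equals min_k m_k. -/
open MeasureTheory Filter Metric Set Topology
open scoped ENNReal Topology

noncomputable section

section AuxLemmas

open scoped NNReal

lemma cauchy_step {n : ℕ} {F : Type} [NormedAddCommGroup F] [NormedSpace ℂ F]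
    {f : Cn n → F} {x : Cn n} {r C : ℝ} {k : ℕ} (hk : 1 ≤ k)
    (hr : 0 < r) (hC : 0 ≤ C)
    (hdiff : ∀ w : Cn n, ‖w‖ ≤ r → DifferentiableAt ℂ f (x + w))
    (hbound : ∀ w : Cn n, ‖w‖ ≤ r → ‖f (x + w)‖ ≤ C * ‖w‖ ^ k) :
    ∀ w : Cn n, ∀ ρ : ℝ, ‖w‖ ≤ ρ → ρ ≤ r / 2 → 0 < ρ →
      ‖fderiv ℂ f (x + w)‖ ≤ 2 ^ k * C * ρ ^ (k - 1) := by
  intro w ρ hwρ hρr hρ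
  apply ContinuousLinearMap.opNorm_le_bound _ (by positivity)
  intro y
  rcases eq_or_ne y 0 with rfl | hy
  · simp
  have hy0 : 0 < ‖y‖ := norm_pos_iff.2 hy
  set R : ℝ := ρ / ‖y‖ with hR
  have hR0 : 0 < R := div_pos hρ hy0
  set φ : ℂ → F := fun ζ => f (x + (w + ζ • y)) with hφ
  have hin : ∀ ζ : ℂ, ‖ζ‖ ≤ R → ‖w + ζ • y‖ ≤ r := by
    intro ζ hζ
    have h1 : ‖ζ • y‖ ≤ ρ := by
      rw [norm_smul]
      calc ‖ζ‖ * ‖y‖ ≤ R * ‖y‖ := by gcongr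
        _ = ρ := by rw [hR]; field_simp
    calc ‖w + ζ • y‖ ≤ ‖w‖ + ‖ζ • y‖ := norm_add_le _ _
      _ ≤ ρ + ρ := by gcongr
      _ ≤ r := by linarith
  have hder : ∀ ζ : ℂ, ‖ζ‖ ≤ R →
      HasDerivAt φ (fderiv ℂ f (x + (w + ζ • y)) y) ζ := by
    intro ζ hζ
    have h1 : HasDerivAt (fun ζ : ℂ => x + (w + ζ • y)) ((1:ℂ) • y) ζ :=
      (((hasDerivAt_id ζ).smul_const y).const_add w).const_add x
    rw [one_smul] at h1
    exact ((hdiff _ (hin ζ hζ)).hasFDerivAt.comp_hasDerivAt ζ h1)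
  have hdo : DifferentiableOn ℂ φ (closedBall 0 R) := by
    intro ζ hζ
    exact (hder ζ (by simpa using mem_closedBall_zero_iff.1 hζ)).differentiableAt.differentiableWithinAt
  have hdc : DiffContOnCl ℂ φ (ball 0 R) := by
    refine ⟨hdo.mono ball_subset_closedBall, ?_⟩
    rw [closure_ball 0 hR0.ne']
    exact hdo.continuousOn
  have hsb : ∀ z ∈ sphere (0:ℂ) R, ‖φ z‖ ≤ C * (2 * ρ) ^ k := by
    intro z hz
    have hz' : ‖z‖ ≤ R :=
      le_of_eq (by exact mem_sphere_zero_iff_norm.1 hz)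
    have := hbound _ (hin z hz')
    refine this.trans ?_
    have h2ρ : ‖w + z • y‖ ≤ 2 * ρ := by
      have h1 : ‖z • y‖ ≤ ρ := by
        rw [norm_smul]
        calc ‖z‖ * ‖y‖ ≤ R * ‖y‖ := by gcongr
          _ = ρ := by rw [hR]; field_simp
      calc ‖w + z • y‖ ≤ ‖w‖ + ‖z • y‖ := norm_add_le _ _
        _ ≤ ρ + ρ := by gcongr
        _ = 2 * ρ := by ring
    have h2ρ0 : (0:ℝ) ≤ 2 * ρ := by positivity
    gcongr
  have hkey := Complex.norm_deriv_le_of_forall_mem_sphere_norm_le hR0 hdc hsb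
  have hderiv0 : deriv φ 0 = fderiv ℂ f (x + w) y := by
    have := (hder 0 (by simp [hR0.le])).deriv
    simpa using this
  rw [hderiv0] at hkey
  refine hkey.trans ?_
  rw [hR, div_div_eq_mul_div, mul_pow, div_le_iff₀ (by positivity : (0:ℝ) < ρ)]
  have hpk : ρ ^ (k - 1) * ρ = ρ ^ k := by
    rw [← pow_succ]
    congr 1
    omega
  exact le_of_eq (by rw [← hpk]; ring)

lemma decay_bound {n : ℕ} {F : Type} [NormedAddCommGroup F] [NormedSpace ℂ F]
    {f : Cn n → F} {x : Cn n} {r C : ℝ} {k : ℕ}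
    (hr : 0 < r) (hC : 0 ≤ C)
    (hdiff : ∀ w : Cn n, ‖w‖ ≤ r → DifferentiableAt ℂ f (x + w))
    (hbound : ∀ w : Cn n, ‖w‖ ≤ r → ‖f (x + w)‖ ≤ C * ‖w‖ ^ (k + 2)) :
    ∀ w : Cn n, ‖w‖ ≤ r / 2 → ‖fderiv ℂ f (x + w)‖ ≤ 2 ^ (k + 2) * C * ‖w‖ ^ (k + 1) := by
  have hstep := cauchy_step (by omega : 1 ≤ k + 2) hr hC hdiff hbound
  intro w hw
  rcases eq_or_ne w 0 with rfl | hw0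
  · simp only [norm_zero, zero_pow (Nat.succ_ne_zero k), mul_zero]
    have hlim : Tendsto (fun ρ : ℝ => 2 ^ (k + 2) * C * ρ ^ (k + 1)) (nhdsWithin 0 (Ioi 0)) (nhds 0) := by
      have h1 : Tendsto (fun ρ : ℝ => 2 ^ (k + 2) * C * ρ ^ (k + 1)) (nhds 0) (nhds 0) := by
        have := ((continuous_pow (k + 1)).tendsto (0:ℝ)).const_mul ((2:ℝ) ^ (k + 2) * C)
        simpa [zero_pow (Nat.succ_ne_zero k)] using this
      exact h1.mono_left nhdsWithin_le_nhds
    refine ge_of_tendsto hlim ?_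
    filter_upwards [Ioc_mem_nhdsGT_of_mem (by constructor <;> [rfl; positivity] :
        (0:ℝ) ∈ Ico 0 (r / 2))] with ρ hρ
    have := hstep 0 ρ (by simpa using hρ.1.le) hρ.2 hρ.1
    simpa using this
  · have hw0' : 0 < ‖w‖ := norm_pos_iff.2 hw0
    have := hstep w ‖w‖ le_rfl hw hw0'
    simpa using this

lemma vanish {n : ℕ} : ∀ (k : ℕ) {F : Type} [NormedAddCommGroup F] [NormedSpace ℂ F]
    [CompleteSpace F] (f : Cn n → F) (x : Cn n) (C r : ℝ), 0 < r → 0 ≤ C →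
    (∀ w : Cn n, ‖w‖ ≤ r → AnalyticAt ℂ f (x + w)) →
    (∀ w : Cn n, ‖w‖ ≤ r → ‖f (x + w)‖ ≤ C * ‖w‖ ^ (k + 1)) →
    iteratedFDeriv ℂ k f x = 0 := by
  intro k
  induction k with
  | zero =>
    intro F _ _ _ f x C r hr hC han hb
    have h0 := hb 0 (by simp [hr.le])
    simp at h0
    ext m
    simp [iteratedFDeriv_zero_apply, h0]
  | succ k ih =>
    intro F _ _ _ f x C r hr hC han hb
    have hdiff : ∀ w : Cn n, ‖w‖ ≤ r → DifferentiableAt ℂ f (x + w) :=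
      fun w hw => (han w hw).differentiableAt
    have hgb := decay_bound hr hC hdiff hb
    have hgan : ∀ w : Cn n, ‖w‖ ≤ r / 2 → AnalyticAt ℂ (fderiv ℂ f) (x + w) :=
      fun w hw => (han w (by linarith)).fderiv
    have h0 := ih (fderiv ℂ f) x (2 ^ (k + 2) * C) (r / 2) (by positivity) (by positivity)
      hgan hgb
    ext m
    rw [iteratedFDeriv_succ_apply_right]
    have : (fun y => fderiv ℂ f y) = fderiv ℂ f := rfl
    rw [this, h0]
    simp

lemma series_upper {n : ℕ} {F : Type} [NormedAddCommGroup F] [NormedSpace ℂ F]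
    {f : Cn n → F} {p : FormalMultilinearSeries ℂ (Cn n) F} {x : Cn n} {R : ℝ≥0∞}
    (hp : HasFPowerSeriesOnBall f p x R) (m : ℕ)
    (hdiag : ∀ j < m, ∀ y : Cn n, (p j fun _ => y) = 0) :
    ∃ C > 0, ∃ r > 0, ∀ w : Cn n, ‖w‖ ≤ r → ‖f (x + w)‖ ≤ C * ‖w‖ ^ m := by
  obtain ⟨r, hr0, hrR⟩ := ENNReal.lt_iff_exists_nnreal_btwn.1 hp.r_pos
  have hr0' : (0:ℝ) < r := by
    have := ENNReal.coe_pos.1 hr0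
    exact_mod_cast this
  have hrrad : (r : ℝ≥0∞) < p.radius := hrR.trans_le hp.r_le
  have hS : Summable fun j => ‖p j‖ * (r:ℝ) ^ j := p.summable_norm_mul_pow hrrad
  set S : ℝ := ∑' j, ‖p j‖ * (r:ℝ) ^ j with hSdef
  have hS0 : 0 ≤ S := tsum_nonneg fun j => by positivity
  refine ⟨S / (r:ℝ) ^ m + 1, by positivity, (r:ℝ) / 2, by positivity, ?_⟩
  intro w hw
  have hwr : ‖w‖ ≤ (r:ℝ) := hw.trans (by linarith)
  have hmem : w ∈ Metric.eball (0 : Cn n) R := by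
    rw [Metric.mem_eball, edist_zero_right]
    have h1 : ‖w‖₊ ≤ r := by exact_mod_cast hwr
    exact lt_of_le_of_lt (ENNReal.coe_le_coe.2 h1) hrR
  have hsum := hp.hasSum hmem
  set a : ℕ → F := fun j => p j fun _ => w with ha
  have hbd : ∀ j, ‖a j‖ ≤ ‖p j‖ * (r:ℝ) ^ j * (‖w‖ / (r:ℝ)) ^ m := by
    intro j
    rcases lt_or_ge j m with hj | hj
    · rw [ha]
      simp only [hdiag j hj w, norm_zero]
      positivity
    · have h1 : ‖a j‖ ≤ ‖p j‖ * ‖w‖ ^ j := by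
        have := (p j).le_opNorm fun _ => w
        simpa [Finset.prod_const] using this
      refine h1.trans ?_
      have h2 : ‖w‖ ^ j = (r:ℝ) ^ j * (‖w‖ / (r:ℝ)) ^ j := by
        rw [div_pow]; field_simp
      rw [h2, ← mul_assoc]
      exact mul_le_mul_of_nonneg_left
        (pow_le_pow_of_le_one (by positivity) (by rw [div_le_one hr0']; exact hwr) hj)
        (by positivity)
  have hsb : Summable fun j => ‖p j‖ * (r:ℝ) ^ j * (‖w‖ / (r:ℝ)) ^ m := hS.mul_right _
  have hsa : Summable fun j => ‖a j‖ :=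
    Summable.of_nonneg_of_le (fun j => norm_nonneg _) hbd hsb
  have key : ‖f (x + w)‖ ≤ S * (‖w‖ / (r:ℝ)) ^ m := by
    rw [← hsum.tsum_eq]
    calc ‖∑' j, a j‖ ≤ ∑' j, ‖a j‖ := norm_tsum_le_tsum_norm hsa
      _ ≤ ∑' j, ‖p j‖ * (r:ℝ) ^ j * (‖w‖ / (r:ℝ)) ^ m := Summable.tsum_le_tsum hbd hsa hsb
      _ = S * (‖w‖ / (r:ℝ)) ^ m := by rw [hSdef, tsum_mul_right]
  refine key.trans ?_
  rw [div_pow]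
  rw [div_eq_mul_inv, ← mul_assoc]
  calc S * (‖w‖ ^ m) * ((r:ℝ) ^ m)⁻¹ = S / (r:ℝ) ^ m * ‖w‖ ^ m := by ring
    _ ≤ (S / (r:ℝ) ^ m + 1) * ‖w‖ ^ m := by gcongr; linarith

lemma series_lower {n : ℕ} {F : Type} [NormedAddCommGroup F] [NormedSpace ℂ F]
    {f : Cn n → F} {p : FormalMultilinearSeries ℂ (Cn n) F} {x : Cn n} {R : ℝ≥0∞}
    (hp : HasFPowerSeriesOnBall f p x R) (ν : ℕ) (y : Cn n) (hny : 0 < ‖y‖)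
    (hy : (p ν fun _ => y) ≠ 0)
    (hdiag : ∀ j < ν, (p j fun _ => y) = 0) :
    ∃ c > 0, ∃ ε > 0, ∀ t : ℝ, 0 < t → t ≤ ε → c * t ^ ν ≤ ‖f (x + (t : ℂ) • y)‖ := by
  obtain ⟨r, hr0, hrR⟩ := ENNReal.lt_iff_exists_nnreal_btwn.1 hp.r_pos
  have hr0' : (0:ℝ) < r := by
    have := ENNReal.coe_pos.1 hr0
    exact_mod_cast this
  have hrrad : (r : ℝ≥0∞) < p.radius := hrR.trans_le hp.r_le
  have hS : Summable fun j => ‖p j‖ * (r:ℝ) ^ j := p.summable_norm_mul_pow hrrad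
  set S : ℝ := ∑' j, ‖p j‖ * (r:ℝ) ^ j with hSdef
  have hS0 : 0 ≤ S := tsum_nonneg fun j => by positivity
  set c₀ : ℝ := ‖(p ν fun _ => y)‖ with hc₀
  have hc₀0 : 0 < c₀ := norm_pos_iff.2 hy
  set K : ℝ := S * (‖y‖ / (r:ℝ)) ^ (ν + 1) with hK
  have hK0 : 0 ≤ K := by positivity
  refine ⟨c₀ / 2, by positivity, min ((r:ℝ) / (2 * ‖y‖)) (c₀ / (2 * (K + 1))), by positivity, ?_⟩
  intro t ht htε
  have ht1 : t * ‖y‖ ≤ (r:ℝ) / 2 := by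
    have := htε.trans (min_le_left _ _)
    rw [le_div_iff₀ (by positivity)] at this
    calc t * ‖y‖ ≤ (r:ℝ) / (2 * ‖y‖) * ‖y‖ := by gcongr; exact htε.trans (min_le_left _ _)
      _ = (r:ℝ) / 2 := by field_simp
  have ht2 : t ≤ c₀ / (2 * (K + 1)) := htε.trans (min_le_right _ _)
  set w : Cn n := (t : ℂ) • y with hw
  have hwn : ‖w‖ = t * ‖y‖ := by
    rw [hw, norm_smul, Complex.norm_real, Real.norm_eq_abs, abs_of_pos ht]
  have hwr : ‖w‖ ≤ (r:ℝ) := by rw [hwn]; linarith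
  have hmem : w ∈ Metric.eball (0 : Cn n) R := by
    rw [Metric.mem_eball, edist_zero_right]
    have h1 : ‖w‖₊ ≤ r := by exact_mod_cast hwr
    exact lt_of_le_of_lt (ENNReal.coe_le_coe.2 h1) hrR
  have hsum := hp.hasSum hmem
  set a : ℕ → F := fun j => p j fun _ => w with ha
  have haν : a ν = (t:ℂ) ^ ν • (p ν fun _ => y) := by
    rw [ha, hw]
    have := (p ν).map_smul_univ (fun _ => (t:ℂ)) (fun _ => y)
    simpa [Finset.prod_const] using this
  have haνn : ‖a ν‖ = t ^ ν * c₀ := by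
    rw [haν, norm_smul, norm_pow, Complex.norm_real, Real.norm_eq_abs, abs_of_pos ht, hc₀]
  have hsub := hsum.sub (hasSum_ite_eq ν (a ν))
  set q : ℝ := t * ‖y‖ / (r:ℝ) with hq
  have hq0 : 0 ≤ q := by positivity
  have hq1 : q ≤ 1 := by rw [hq, div_le_one hr0']; linarith
  have hbd : ∀ j, ‖a j - (if j = ν then a ν else 0)‖ ≤ ‖p j‖ * (r:ℝ) ^ j * q ^ (ν + 1) := by
    intro j
    rcases eq_or_ne j ν with rfl | hjν
    · rw [if_pos rfl, sub_self, norm_zero]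
      positivity
    rcases lt_or_ge j ν with hj | hj
    · have : a j = 0 := by
        have h2 := (p j).map_smul_univ (fun _ => (t:ℂ)) (fun _ => y)
        simp only [Finset.prod_const, Finset.card_univ, Fintype.card_fin] at h2
        show ((p j) fun _ => (t:ℂ) • y) = 0
        rw [h2, hdiag j hj, smul_zero]
      simp only [if_neg hjν, this, sub_zero, norm_zero]
      positivity
    · have hj' : ν + 1 ≤ j := by omega
      have h1 : ‖a j‖ ≤ ‖p j‖ * ‖w‖ ^ j := by
        have := (p j).le_opNorm fun _ => w
        simpa [Finset.prod_const] using this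
      have h2 : ‖w‖ ^ j = (r:ℝ) ^ j * q ^ j := by
        rw [hq, ← hwn, div_pow]; field_simp
      simp only [if_neg hjν, sub_zero]
      refine h1.trans ?_
      rw [h2, ← mul_assoc]
      exact mul_le_mul_of_nonneg_left (pow_le_pow_of_le_one hq0 hq1 hj') (by positivity)
  have hsb : Summable fun j => ‖p j‖ * (r:ℝ) ^ j * q ^ (ν + 1) := hS.mul_right _
  have hsa : Summable fun j => ‖a j - (if j = ν then a ν else 0)‖ :=
    Summable.of_nonneg_of_le (fun j => norm_nonneg _) hbd hsb
  have htail : ‖f (x + w) - a ν‖ ≤ S * q ^ (ν + 1) := by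
    rw [← hsub.tsum_eq]
    calc ‖∑' j, (a j - (if j = ν then a ν else 0))‖
        ≤ ∑' j, ‖a j - (if j = ν then a ν else 0)‖ := norm_tsum_le_tsum_norm hsa
      _ ≤ ∑' j, ‖p j‖ * (r:ℝ) ^ j * q ^ (ν + 1) := Summable.tsum_le_tsum hbd hsa hsb
      _ = S * q ^ (ν + 1) := by rw [hSdef, tsum_mul_right]
  have hqt : S * q ^ (ν + 1) = K * t ^ (ν + 1) := by
    rw [hK, hq]
    rw [div_pow, div_pow, mul_pow]
    ring
  have htri : ‖a ν‖ - ‖f (x + w) - a ν‖ ≤ ‖f (x + w)‖ := by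
    have h3 : ‖a ν‖ ≤ ‖a ν - f (x + w)‖ + ‖f (x + w)‖ := by
      calc ‖a ν‖ = ‖(a ν - f (x + w)) + f (x + w)‖ := by rw [sub_add_cancel]
        _ ≤ ‖a ν - f (x + w)‖ + ‖f (x + w)‖ := norm_add_le _ _
    rw [norm_sub_rev (f (x + w)) (a ν)]
    linarith
  have hKt : K * t ^ (ν + 1) ≤ c₀ / 2 * t ^ ν := by
    rw [pow_succ, ← mul_assoc]
    calc K * t ^ ν * t = (K * t) * t ^ ν := by ring
      _ ≤ c₀ / 2 * t ^ ν := by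
        gcongr
        calc K * t ≤ (K + 1) * t := by gcongr; linarith
          _ ≤ (K + 1) * (c₀ / (2 * (K + 1))) := by gcongr
          _ = c₀ / 2 := by field_simp
  calc c₀ / 2 * t ^ ν = t ^ ν * c₀ - c₀ / 2 * t ^ ν := by ring
    _ ≤ ‖a ν‖ - ‖f (x + w) - a ν‖ := by
        rw [haνn]
        have := htail.trans (le_of_eq hqt)
        have h5 : ‖f (x + w) - a ν‖ ≤ c₀ / 2 * t ^ ν := this.trans hKt
        linarith
    _ ≤ ‖f (x + w)‖ := htri


lemma tendsto_inv_atBot_zero'' : Filter.Tendsto (fun t : ℝ => t⁻¹) Filter.atBot (nhds 0) := by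
  have h1 : Filter.Tendsto (fun t : ℝ => -t) Filter.atBot Filter.atTop :=
    tendsto_neg_atBot_atTop
  have h : Filter.Tendsto (fun t : ℝ => (-t)⁻¹) Filter.atBot (nhds 0) :=
    tendsto_inv_atTop_zero.comp h1
  have h2 : (fun t : ℝ => t⁻¹) = fun t : ℝ => -(-t)⁻¹ := by
    funext t; rw [inv_neg, neg_neg]
  rw [h2]
  simpa using h.neg

end AuxLemmas

/-- For a holomorphic mapping `f = (f₁,…,f_M)` near `x` with `f(x) = 0` and
each `f_k ≢ 0` of vanishing order `m_k` at `x`, the Lelong number of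
`u = ½ log ∑_k |f_k|²` at `x` equals `min_k m_k`. -/
theorem statement7 {n M : ℕ} (Ω : Set (Cn n)) (hΩ : IsOpen Ω)
    (f : Fin M → Cn n → ℂ) (hf : ∀ k, ∀ z ∈ Ω, AnalyticAt ℂ (f k) z)
    (x : Cn n) (hx : x ∈ Ω) (hfx : ∀ k, f k x = 0) (m : Fin M → ℕ)
    (hm : ∀ k, iteratedFDeriv ℂ (m k) (f k) x ≠ 0)
    (hm' : ∀ k, ∀ j < m k, iteratedFDeriv ℂ j (f k) x = 0) :
    HasLelongNumber
      (fun z => if (∑ k, (‖f k z‖) ^ 2) = 0 then (⊥ : EReal)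
        else ((((1 : ℝ) / 2) * Real.log (∑ k, (‖f k z‖) ^ 2) : ℝ) : EReal))
      x (⨅ k, ((m k : ℝ) : EReal)) := by
  classical
  set u : Cn n → EReal := fun z => if (∑ k, (‖f k z‖) ^ 2) = 0 then (⊥ : EReal)
    else ((((1 : ℝ) / 2) * Real.log (∑ k, (‖f k z‖) ^ 2) : ℝ) : EReal) with hu
  rcases Nat.eq_zero_or_pos M with rfl | hM
  · -- trivial case `M = 0`
    have hue : ∀ z, u z = ⊥ := by intro z; simp [hu]
    have hinf : (⨅ k : Fin 0, ((m k : ℝ) : EReal)) = ⊤ := iInf_of_empty _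
    unfold HasLelongNumber
    rw [hinf]
    have hev : ∀ᶠ t : ℝ in atBot, (⊤ : EReal) = ((t⁻¹ : ℝ) : EReal) * supBall u x t := by
      filter_upwards [eventually_le_atBot (-1 : ℝ)] with t ht
      have hsup : supBall u x t = ⊥ := by
        unfold supBall
        have : u '' ball x (Real.exp t) = {⊥} := by
          rw [Set.eq_singleton_iff_nonempty_unique_mem]
          constructor
          · exact ⟨⊥, ⟨x, by simp [Real.exp_pos], hue x⟩⟩
          · rintro e ⟨z, _, rfl⟩; exact hue z
        rw [this, sSup_singleton]
      rw [hsup]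
      have htneg : t⁻¹ < 0 := inv_neg''.2 (by linarith)
      exact (EReal.coe_mul_bot_of_neg htneg).symm
    exact tendsto_const_nhds.congr' hev
  · -- main case `M ≥ 1`
    have hne : Nonempty (Fin M) := ⟨⟨0, hM⟩⟩
    obtain ⟨k₀, hk₀⟩ := Finite.exists_min m
    set ν : ℕ := m k₀ with hν
    -- power series of each `f k` at `x`
    have hser : ∀ k, ∃ p : FormalMultilinearSeries ℂ (Cn n) ℂ, ∃ R : ℝ≥0∞,
        HasFPowerSeriesOnBall (f k) p x R := by
      intro k
      obtain ⟨p, R, hp⟩ := hf k x hx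
      exact ⟨p, R, hp⟩
    choose p R hp using hser
    -- diagonal coefficients of order `< m k` vanish
    have hdiagk : ∀ k, ∀ j < m k, ∀ y : Cn n, (p k j fun _ => y) = 0 := by
      intro k j hj y
      have h1 := (hp k).factorial_smul y j
      rw [hm' k j hj] at h1
      simp only [ContinuousMultilinearMap.zero_apply] at h1
      have h2 : ((Nat.factorial j : ℂ)) • (p k j fun _ => y) = 0 := by
        rw [Nat.cast_smul_eq_nsmul]; exact h1
      rcases smul_eq_zero.1 h2 with h | h
      · exact absurd h (by exact_mod_cast Nat.factorial_ne_zero j)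
      · exact h
    have hν1 : 1 ≤ ν := by
      by_contra hcon
      have hν0 : ν = 0 := by omega
      apply hm k₀
      rw [← hν, hν0]
      ext v
      simp [iteratedFDeriv_zero_apply, hfx k₀]
    -- upper bounds for each `f k`
    have hup : ∀ k, ∃ C > 0, ∃ r > 0, ∀ w : Cn n, ‖w‖ ≤ r →
        ‖f k (x + w)‖ ≤ C * ‖w‖ ^ (m k) :=
      fun k => series_upper (hp k) (m k) (hdiagk k)
    choose C hCpos r hrpos hbk using hup
    -- a good direction for `f k₀`
    obtain ⟨δ, hδ0, hδΩ⟩ := Metric.isOpen_iff.1 hΩ x hx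
    have hexy : ∃ y : Cn n, (p k₀ ν fun _ => y) ≠ 0 := by
      by_contra hcon
      push_neg at hcon
      have hdiag' : ∀ j < ν + 1, ∀ y : Cn n, (p k₀ j fun _ => y) = 0 := by
        intro j hj y
        rcases Nat.lt_succ_iff_lt_or_eq.1 hj with hj' | rfl
        · exact hdiagk k₀ j hj' y
        · exact hcon y
      obtain ⟨C', hC', r', hr', hb'⟩ := series_upper (hp k₀) (ν + 1) hdiag'
      have h0 : iteratedFDeriv ℂ ν (f k₀) x = 0 := by
        refine vanish ν (f k₀) x C' (min r' (δ / 2)) (by positivity) hC'.le ?_ ?_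
        · intro w hw
          have hmem : x + w ∈ Ω := by
            apply hδΩ
            rw [mem_ball, dist_eq_norm, add_sub_cancel_left]
            calc ‖w‖ ≤ min r' (δ / 2) := hw
              _ ≤ δ / 2 := min_le_right _ _
              _ < δ := by linarith
          exact hf k₀ _ hmem
        · intro w hw
          exact hb' w (hw.trans (min_le_left _ _))
      exact hm k₀ h0
    obtain ⟨y, hy⟩ := hexy
    have hy0 : 0 < ‖y‖ := by
      rcases eq_or_ne y 0 with rfl | h
      · exact absurd ((p k₀ ν).map_coord_zero (⟨0, hν1⟩ : Fin ν) rfl) hy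
      · exact norm_pos_iff.2 h
    obtain ⟨c, hc, ε, hε, hlow⟩ := series_lower (hp k₀) ν y hy0 hy
      (fun j hj => hdiagk k₀ j hj y)
    -- assemble constants
    set rmin : ℝ := Finset.univ.inf' Finset.univ_nonempty r with hrmin
    have hrmin0 : 0 < rmin := by
      rw [hrmin, Finset.lt_inf'_iff]
      exact fun k _ => hrpos k
    set A : ℝ := ∑ k, (C k) ^ 2 with hA
    have hA0 : 0 < A := Finset.sum_pos (fun k _ => pow_pos (hCpos k) 2) ⟨k₀, Finset.mem_univ _⟩
    set C₁ : ℝ := (1 / 2) * Real.log A with hC₁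
    set B : ℝ := Real.log c - (ν : ℝ) * Real.log (2 * ‖y‖) with hB
    set T : ℝ := min (Real.log (min 1 rmin)) (min (Real.log (2 * ‖y‖ * ε)) (-1)) with hT
    -- the two key supBall estimates
    have hmain : ∀ t : ℝ, t ≤ T →
        (((ν : ℝ) * t + B : ℝ) : EReal) ≤ supBall u x t ∧
          supBall u x t ≤ (((ν : ℝ) * t + C₁ : ℝ) : EReal) := by
      intro t ht
      have hmin1 : (0:ℝ) < min 1 rmin := lt_min one_pos hrmin0
      have hexp1 : Real.exp t ≤ min 1 rmin := by
        rw [← Real.exp_log hmin1]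
        exact Real.exp_le_exp.2 (ht.trans (min_le_left _ _))
      have hexp2 : Real.exp t ≤ 2 * ‖y‖ * ε := by
        rw [← Real.exp_log (show (0:ℝ) < 2 * ‖y‖ * ε by positivity)]
        exact Real.exp_le_exp.2 (ht.trans ((min_le_right _ _).trans (min_le_left _ _)))
      constructor
      · -- lower bound via the good direction
        set s : ℝ := Real.exp t / (2 * ‖y‖) with hs
        have hs0 : 0 < s := by positivity
        have hsε : s ≤ ε := by
          rw [hs, div_le_iff₀ (by positivity)]
          calc Real.exp t ≤ 2 * ‖y‖ * ε := hexp2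
            _ = ε * (2 * ‖y‖) := by ring
        have hlows := hlow s hs0 hsε
        set z₀ : Cn n := x + ((s : ℝ) : ℂ) • y with hz₀
        have hsy : ‖((s : ℝ) : ℂ) • y‖ = Real.exp t / 2 := by
          rw [norm_smul, Complex.norm_real, Real.norm_eq_abs, abs_of_pos hs0, hs,
            div_mul_eq_mul_div, mul_comm (2:ℝ) ‖y‖, ← div_div,
            mul_div_assoc, div_self hy0.ne', mul_one]
        have hz₀b : z₀ ∈ ball x (Real.exp t) := by
          rw [mem_ball, hz₀, dist_eq_norm, add_sub_cancel_left, hsy]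
          linarith [Real.exp_pos t]
        have habs : c * s ^ ν ≤ ‖f k₀ z₀‖ := by
          rw [hz₀]
          exact hlows
        have h1 : (c * s ^ ν) ^ 2 ≤ (‖f k₀ z₀‖) ^ 2 :=
          pow_le_pow_left₀ (by positivity) habs 2
        have h2 : (‖f k₀ z₀‖) ^ 2 ≤ ∑ k, (‖f k z₀‖) ^ 2 :=
          Finset.single_le_sum (f := fun k => (‖f k z₀‖) ^ 2)
            (fun k _ => sq_nonneg _) (Finset.mem_univ k₀)
        have hpos : 0 < ∑ k, (‖f k z₀‖) ^ 2 :=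
          lt_of_lt_of_le (by positivity) (h1.trans h2)
        have h0 : ¬(∑ k, (‖f k z₀‖) ^ 2 = 0) := hpos.ne'
        have huz : u z₀ =
            ((((1 : ℝ) / 2) * Real.log (∑ k, (‖f k z₀‖) ^ 2) : ℝ) : EReal) := by
          rw [hu]; simp only [if_neg h0]
        have hval : (ν : ℝ) * t + B ≤ (1 : ℝ) / 2 * Real.log (∑ k, (‖f k z₀‖) ^ 2) := by
          have hlog1 : Real.log ((c * s ^ ν) ^ 2) ≤
              Real.log (∑ k, (‖f k z₀‖) ^ 2) :=
            (Real.log_le_log_iff (by positivity) hpos).2 (h1.trans h2)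
          have hlog2 : Real.log ((c * s ^ ν) ^ 2) =
              2 * (Real.log c + (ν : ℝ) * Real.log s) := by
            rw [Real.log_pow, Real.log_mul hc.ne' (by positivity), Real.log_pow]
            push_cast; ring
          have hlogs : Real.log s = t - Real.log (2 * ‖y‖) := by
            rw [hs, Real.log_div (Real.exp_ne_zero t) (by positivity), Real.log_exp]
          rw [hlog2, hlogs] at hlog1
          rw [hB]
          linarith
        calc (((ν : ℝ) * t + B : ℝ) : EReal) ≤ u z₀ := by
              rw [huz]; exact EReal.coe_le_coe_iff.2 hval
          _ ≤ supBall u x t := le_sSup ⟨z₀, hz₀b, rfl⟩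
      · -- upper bound on the ball
        apply sSup_le
        rintro e ⟨z, hz, rfl⟩
        set w : Cn n := z - x with hw
        have hzw : z = x + w := by rw [hw]; abel
        have hwlt : ‖w‖ < Real.exp t := by rw [hw, ← dist_eq_norm]; exact mem_ball.1 hz
        have hw1 : ‖w‖ ≤ 1 := hwlt.le.trans (hexp1.trans (min_le_left _ _))
        have hwr : ∀ k, ‖w‖ ≤ r k := fun k =>
          hwlt.le.trans ((hexp1.trans (min_le_right _ _)).trans
            (Finset.inf'_le _ (Finset.mem_univ k)))
        have hk : ∀ k, ‖f k z‖ ≤ C k * ‖w‖ ^ ν := by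
          intro k
          rw [hzw]
          refine (hbk k w (hwr k)).trans ?_
          exact mul_le_mul_of_nonneg_left
            (pow_le_pow_of_le_one (norm_nonneg _) hw1 (hk₀ k)) (hCpos k).le
        have hsumle : (∑ k, (‖f k z‖) ^ 2) ≤ A * ((Real.exp t) ^ ν) ^ 2 := by
          calc (∑ k, (‖f k z‖) ^ 2) ≤ ∑ k, (C k) ^ 2 * (‖w‖ ^ ν) ^ 2 := by
                refine Finset.sum_le_sum fun k _ => ?_
                calc (‖f k z‖) ^ 2 ≤ (C k * ‖w‖ ^ ν) ^ 2 :=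
                      pow_le_pow_left₀ (norm_nonneg _) (hk k) 2
                  _ = (C k) ^ 2 * (‖w‖ ^ ν) ^ 2 := by ring
            _ = A * (‖w‖ ^ ν) ^ 2 := by rw [hA, Finset.sum_mul]
            _ ≤ A * ((Real.exp t) ^ ν) ^ 2 := by
                refine mul_le_mul_of_nonneg_left ?_ hA0.le
                exact pow_le_pow_left₀ (by positivity)
                  (pow_le_pow_left₀ (norm_nonneg _) hwlt.le ν) 2
        by_cases h0 : (∑ k, (‖f k z‖) ^ 2) = 0
        · have : u z = ⊥ := by rw [hu]; simp only [if_pos h0]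
          rw [this]; exact bot_le
        · have hpos : 0 < ∑ k, (‖f k z‖) ^ 2 :=
            lt_of_le_of_ne (Finset.sum_nonneg fun k _ => sq_nonneg _) (Ne.symm h0)
          have huz : u z =
              ((((1 : ℝ) / 2) * Real.log (∑ k, (‖f k z‖) ^ 2) : ℝ) : EReal) := by
            rw [hu]; simp only [if_neg h0]
          rw [huz, EReal.coe_le_coe_iff]
          have hlog : Real.log (∑ k, (‖f k z‖) ^ 2) ≤
              Real.log (A * ((Real.exp t) ^ ν) ^ 2) :=
            (Real.log_le_log_iff hpos (by positivity)).2 hsumle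
          have hlogr : Real.log (A * ((Real.exp t) ^ ν) ^ 2) =
              Real.log A + 2 * ((ν : ℝ) * t) := by
            rw [Real.log_mul hA0.ne' (by positivity), Real.log_pow, Real.log_pow, Real.log_exp]
            push_cast; ring
          rw [hlogr] at hlog
          rw [hC₁]
          linarith
    -- value of the infimum
    have hiInf : (⨅ k, ((m k : ℝ) : EReal)) = (((ν : ℕ) : ℝ) : EReal) := by
      apply le_antisymm
      · exact iInf_le _ k₀
      · exact le_iInf fun k => EReal.coe_le_coe_iff.2 (by exact_mod_cast hk₀ k)
    unfold HasLelongNumber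
    rw [hiInf]
    set g : ℝ → ℝ := fun t => (supBall u x t).toReal with hg
    have hfin : ∀ t : ℝ, t ≤ T → supBall u x t = ((g t : ℝ) : EReal) := by
      intro t ht
      obtain ⟨hlb, hub⟩ := hmain t ht
      have hnt : supBall u x t ≠ ⊤ := (hub.trans_lt (EReal.coe_lt_top _)).ne
      have hnb : supBall u x t ≠ ⊥ := ((EReal.bot_lt_coe _).trans_le hlb).ne'
      exact (EReal.coe_toReal hnt hnb).symm
    have hgb : ∀ t : ℝ, t ≤ T → (ν : ℝ) * t + B ≤ g t ∧ g t ≤ (ν : ℝ) * t + C₁ := by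
      intro t ht
      obtain ⟨hlb, hub⟩ := hmain t ht
      rw [hfin t ht] at hlb hub
      exact ⟨EReal.coe_le_coe_iff.1 hlb, EReal.coe_le_coe_iff.1 hub⟩
    have hinv : Tendsto (fun t : ℝ => t⁻¹) atBot (𝓝 0) := tendsto_inv_atBot_zero''
    have hreal : Tendsto (fun t : ℝ => t⁻¹ * g t) atBot (𝓝 ((ν : ℕ) : ℝ)) := by
      have hlim1 : Tendsto (fun t : ℝ => (ν : ℝ) + C₁ * t⁻¹) atBot (𝓝 ((ν : ℕ) : ℝ)) := by
        have := (hinv.const_mul C₁).const_add ((ν : ℕ) : ℝ)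
        simpa using this
      have hlim2 : Tendsto (fun t : ℝ => (ν : ℝ) + B * t⁻¹) atBot (𝓝 ((ν : ℕ) : ℝ)) := by
        have := (hinv.const_mul B).const_add ((ν : ℕ) : ℝ)
        simpa using this
      refine tendsto_of_tendsto_of_tendsto_of_le_of_le' hlim1 hlim2 ?_ ?_
      · filter_upwards [eventually_le_atBot T, eventually_le_atBot (-1 : ℝ)] with t htT ht1
        have htn : t < 0 := by linarith
        have h := (hgb t htT).2
        have h2 := mul_le_mul_of_nonpos_left h (le_of_lt (inv_neg''.2 htn))
        have htne : t ≠ 0 := ne_of_lt htn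
        have h3 : t⁻¹ * ((ν : ℝ) * t + C₁) = (ν : ℝ) + C₁ * t⁻¹ := by
          field_simp
        rw [h3] at h2
        exact h2
      · filter_upwards [eventually_le_atBot T, eventually_le_atBot (-1 : ℝ)] with t htT ht1
        have htn : t < 0 := by linarith
        have h := (hgb t htT).1
        have h2 := mul_le_mul_of_nonpos_left h (le_of_lt (inv_neg''.2 htn))
        have htne : t ≠ 0 := ne_of_lt htn
        have h3 : t⁻¹ * ((ν : ℝ) * t + B) = (ν : ℝ) + B * t⁻¹ := by
          field_simp
        rw [h3] at h2
        exact h2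
    have hcoe := EReal.tendsto_coe.2 hreal
    refine Tendsto.congr' ?_ hcoe
    filter_upwards [eventually_le_atBot T] with t ht
    rw [EReal.coe_mul, hfin t ht]
end
end

section
/- Let ψ : ℝⁿ₋ → ℝ₋ be convex, nondecreasing in each variable, and positively homogeneous: ψ(ct) = cψ(t) for all c > 0 and t ∈ ℝⁿ₋. Define B_ψ = {a ∈ ℝ₊ⁿ : ⟨a,t⟩ ≤ ψ(t) for all t ∈ ℝⁿ₋}. Then B_ψ is a closed convex complete subset of ℝ₊ⁿ (i.e., a + ℝ₊ⁿ ⊆ B_ψ for every a ∈ B_ψ), and ψ is the restriction to ℝⁿ₋ of the support function of B_ψ: ψ(t) = sup{⟨a,t⟩ : a ∈ B_ψ} for all t ∈ ℝⁿ₋. -/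
open Set

noncomputable section

/-- The open negative orthant `ℝⁿ₋` (of directions). -/
def negOrth (n : ℕ) : Set (Fin n → ℝ) := {t | ∀ k, t k < 0}

lemma isOpen_negOrth (n : ℕ) : IsOpen (negOrth n) := by
  have : negOrth n = ⋂ k, {t : Fin n → ℝ | t k < 0} := by
    ext t; simp [negOrth]
  rw [this]
  exact isOpen_iInter_of_finite fun k =>
    isOpen_lt (continuous_apply k) continuous_const

lemma convex_negOrth (n : ℕ) : Convex ℝ (negOrth n) := by
  intro t ht s hs x y hx hy hxy
  intro k
  have h1 : t k < 0 := ht k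
  have h2 : s k < 0 := hs k
  have hxk : x * t k ≤ 0 := mul_nonpos_of_nonneg_of_nonpos hx h1.le
  have hyk : y * s k ≤ 0 := mul_nonpos_of_nonneg_of_nonpos hy h2.le
  have : x * t k + y * s k < 0 := by
    rcases lt_or_eq_of_le hx with hx' | hx'
    · have : x * t k < 0 := mul_neg_of_pos_of_neg hx' h1
      linarith
    · have hy' : (0 : ℝ) < y := by linarith
      have : y * s k < 0 := mul_neg_of_pos_of_neg hy' h2
      linarith
  simpa [Pi.add_apply, Pi.smul_apply, smul_eq_mul] using this

/-- If `ψ : ℝⁿ₋ → ℝ₋` is convex, nondecreasing in each variable and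
positively homogeneous, then `B_ψ = {a ∈ ℝ₊ⁿ : ⟨a,t⟩ ≤ ψ(t) ∀ t ∈ ℝⁿ₋}` is a closed convex
complete subset of `ℝ₊ⁿ` and `ψ` is the restriction to `ℝⁿ₋` of the support function of
`B_ψ`. -/
theorem statement16 {n : ℕ} (ψ : (Fin n → ℝ) → ℝ)
    (hneg : ∀ t ∈ negOrth n, ψ t ≤ 0)
    (hconv : ConvexOn ℝ (negOrth n) ψ)
    (hmono : ∀ t ∈ negOrth n, ∀ s ∈ negOrth n, (∀ k, t k ≤ s k) → ψ t ≤ ψ s)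
    (hhom : ∀ c : ℝ, 0 < c → ∀ t ∈ negOrth n, ψ (c • t) = c * ψ t) :
    IsClosed {a : Fin n → ℝ | (∀ k, 0 ≤ a k) ∧ ∀ t ∈ negOrth n, ∑ k, a k * t k ≤ ψ t} ∧
    Convex ℝ {a : Fin n → ℝ | (∀ k, 0 ≤ a k) ∧ ∀ t ∈ negOrth n, ∑ k, a k * t k ≤ ψ t} ∧
    (∀ a ∈ {a : Fin n → ℝ | (∀ k, 0 ≤ a k) ∧ ∀ t ∈ negOrth n, ∑ k, a k * t k ≤ ψ t},
      ∀ v : Fin n → ℝ, (∀ k, 0 ≤ v k) →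
        a + v ∈ {a : Fin n → ℝ | (∀ k, 0 ≤ a k) ∧ ∀ t ∈ negOrth n, ∑ k, a k * t k ≤ ψ t}) ∧
    (∀ t ∈ negOrth n, ψ t = sSup {s : ℝ |
      ∃ a ∈ {a : Fin n → ℝ | (∀ k, 0 ≤ a k) ∧ ∀ t' ∈ negOrth n, ∑ k, a k * t' k ≤ ψ t'},
        s = ∑ k, a k * t k}) := by
  set B := {a : Fin n → ℝ | (∀ k, 0 ≤ a k) ∧ ∀ t ∈ negOrth n, ∑ k, a k * t k ≤ ψ t} with hBdef
  -- Closedness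
  have hclosed : IsClosed B := by
    have hEq : B = {a : Fin n → ℝ | ∀ k, 0 ≤ a k} ∩
        ⋂ t ∈ negOrth n, {a : Fin n → ℝ | ∑ k, a k * t k ≤ ψ t} := by
      ext a; simp [hBdef]
    rw [hEq]
    refine IsClosed.inter ?_ ?_
    · have : {a : Fin n → ℝ | ∀ k, 0 ≤ a k} = ⋂ k, {a : Fin n → ℝ | 0 ≤ a k} := by
        ext a; simp
      rw [this]
      exact isClosed_iInter fun k => isClosed_le continuous_const (continuous_apply k)
    · exact isClosed_biInter fun t _ => isClosed_le
        (continuous_finset_sum _ fun k _ => (continuous_apply k).mul continuous_const)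
        continuous_const
  -- Convexity
  have hconvB : Convex ℝ B := by
    intro a ha b hb x y hx hy hxy
    refine ⟨fun k => ?_, fun t ht => ?_⟩
    · have : 0 ≤ x * a k + y * b k :=
        add_nonneg (mul_nonneg hx (ha.1 k)) (mul_nonneg hy (hb.1 k))
      simpa [Pi.add_apply, Pi.smul_apply, smul_eq_mul] using this
    · have h1 : ∑ k, (x • a + y • b) k * t k
          = x * ∑ k, a k * t k + y * ∑ k, b k * t k := by
        simp only [Pi.add_apply, Pi.smul_apply, smul_eq_mul, add_mul,
          Finset.sum_add_distrib, Finset.mul_sum]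
        ring_nf
      rw [h1]
      calc x * ∑ k, a k * t k + y * ∑ k, b k * t k
          ≤ x * ψ t + y * ψ t := by
            gcongr <;> [exact ha.2 t ht; exact hb.2 t ht]
        _ = ψ t := by rw [← add_mul, hxy, one_mul]
  refine ⟨hclosed, hconvB, ?_, ?_⟩
  -- upward completeness
  · intro a ha v hv
    refine ⟨fun k => add_nonneg (ha.1 k) (hv k), fun t ht => ?_⟩
    have h1 : ∑ k, (a + v) k * t k = ∑ k, a k * t k + ∑ k, v k * t k := by
      simp [add_mul, Finset.sum_add_distrib]
    have h2 : ∑ k, v k * t k ≤ 0 :=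
      Finset.sum_nonpos fun k _ => mul_nonpos_of_nonneg_of_nonpos (hv k) (ht k).le
    have := ha.2 t ht
    rw [h1]; linarith
  -- support function identity
  · intro t ht
    -- continuous on negOrth
    have hcont : ContinuousOn ψ (negOrth n) := hconv.continuousOn (isOpen_negOrth n)
    -- strict epigraph
    set S : Set ((Fin n → ℝ) × ℝ) := {p | p.1 ∈ negOrth n ∧ ψ p.1 < p.2} with hSdef
    have hSconv : Convex ℝ S := by
      intro p hp q hq x y hx hy hxy
      refine ⟨convex_negOrth n hp.1 hq.1 hx hy hxy, ?_⟩
      have hψ : ψ (x • p.1 + y • q.1) ≤ x * ψ p.1 + y * ψ q.1 :=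
        hconv.2 hp.1 hq.1 hx hy hxy
      have : x * ψ p.1 + y * ψ q.1 < x * p.2 + y * q.2 := by
        rcases lt_or_eq_of_le hx with hx' | hx'
        · have h1 : x * ψ p.1 < x * p.2 := by
            exact mul_lt_mul_of_pos_left hp.2 hx'
          have h2 : y * ψ q.1 ≤ y * q.2 := mul_le_mul_of_nonneg_left hq.2.le hy
          linarith
        · have hy' : (0 : ℝ) < y := by linarith
          have h2 : y * ψ q.1 < y * q.2 := mul_lt_mul_of_pos_left hq.2 hy'
          simp only [← hx', zero_mul]
          linarith
      calc ψ ((x • p + y • q).1) = ψ (x • p.1 + y • q.1) := rfl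
        _ ≤ x * ψ p.1 + y * ψ q.1 := hψ
        _ < x * p.2 + y * q.2 := this
        _ = (x • p + y • q).2 := rfl
    have hSopen : IsOpen S := by
      have hU : IsOpen ((negOrth n) ×ˢ (univ : Set ℝ)) :=
        (isOpen_negOrth n).prod isOpen_univ
      have hcont' : ContinuousOn (fun p : (Fin n → ℝ) × ℝ => p.2 - ψ p.1)
          ((negOrth n) ×ˢ (univ : Set ℝ)) := by
        apply ContinuousOn.sub
        · exact continuous_snd.continuousOn
        · exact hcont.comp continuous_fst.continuousOn (fun p hp => hp.1)
      have : S = ((negOrth n) ×ˢ (univ : Set ℝ)) ∩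
          (fun p : (Fin n → ℝ) × ℝ => p.2 - ψ p.1) ⁻¹' (Ioi 0) := by
        ext p
        simp only [hSdef, mem_setOf_eq, mem_inter_iff, mem_prod, mem_univ, and_true,
          mem_preimage, mem_Ioi, sub_pos]
      rw [this]
      exact hcont'.isOpen_inter_preimage hU isOpen_Ioi
    have htS : ((t, ψ t) : (Fin n → ℝ) × ℝ) ∉ S := fun h => lt_irrefl _ h.2
    obtain ⟨f, hf⟩ := geometric_hahn_banach_open_point hSconv hSopen htS
    -- decompose f
    set c : ℝ := f ((0 : Fin n → ℝ), (1 : ℝ)) with hc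
    have hsplit : ∀ (s : Fin n → ℝ) (y : ℝ), f (s, y) = f (s, 0) + y * c := by
      intro s y
      have : ((s, y) : (Fin n → ℝ) × ℝ) = (s, 0) + y • ((0 : Fin n → ℝ), (1 : ℝ)) := by
        simp [Prod.ext_iff]
      rw [this, map_add, map_smul, smul_eq_mul]
    have hclt : c < 0 := by
      have h1 : f (t, ψ t + 1) < f (t, ψ t) :=
        hf _ ⟨ht, show ψ t < ψ t + 1 by linarith⟩
      rw [hsplit t (ψ t + 1), hsplit t (ψ t)] at h1
      linarith
    have hcne : (c : ℝ) ≠ 0 := ne_of_lt hclt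
    -- subgradient inequality
    have hsub : ∀ s ∈ negOrth n, f (s, 0) + ψ s * c ≤ f (t, 0) + ψ t * c := by
      intro s hs
      by_contra h
      push_neg at h
      set δ : ℝ := (f (s, 0) + ψ s * c) - (f (t, 0) + ψ t * c) with hδdef
      have hδ : 0 < δ := by linarith
      have hε : 0 < δ / (-2 * c) := div_pos hδ (by linarith)
      have h1 : f (s, ψ s + δ / (-2 * c)) < f (t, ψ t) :=
        hf _ ⟨hs, show ψ s < ψ s + δ / (-2 * c) by linarith⟩
      rw [hsplit s _, hsplit t _] at h1
      have h2 : (ψ s + δ / (-2 * c)) * c = ψ s * c - δ / 2 := by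
        field_simp
        ring
      rw [h2] at h1
      linarith
    -- the linear part
    set L : (Fin n → ℝ) →L[ℝ] ℝ := f.comp (ContinuousLinearMap.inl ℝ (Fin n → ℝ) ℝ) with hL
    have hLval : ∀ s : Fin n → ℝ, L s = f (s, 0) := fun s => rfl
    have hLsum : ∀ s : Fin n → ℝ, L s = ∑ k, s k * L (Pi.single k 1) := by
      intro s
      conv_lhs => rw [pi_eq_sum_univ s]
      rw [map_sum]
      refine Finset.sum_congr rfl fun k _ => ?_
      rw [map_smul, smul_eq_mul]
      congr 2
      ext j
      simp [Pi.single_apply, eq_comm]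
    -- define a
    set a : Fin n → ℝ := fun k => L (Pi.single k 1) / (-c) with ha
    have hsum : ∀ s : Fin n → ℝ, ∑ k, a k * s k = L s / (-c) := by
      intro s
      rw [hLsum s, Finset.sum_div]
      congr 1; ext k
      rw [ha]
      field_simp
    -- g t = ψ t : L t + ψ t * c = 0
    have hkey : L t + ψ t * c = 0 := by
      have hm2 : (2 : ℝ) • t ∈ negOrth n := by
        intro k
        simpa [Pi.smul_apply, smul_eq_mul] using
          mul_neg_of_pos_of_neg (by norm_num : (0:ℝ) < 2) (ht k)
      have hm3 : ((1:ℝ)/2) • t ∈ negOrth n := by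
        intro k
        simpa [Pi.smul_apply, smul_eq_mul] using
          mul_neg_of_pos_of_neg (by norm_num : (0:ℝ) < 1/2) (ht k)
      have h2 : L ((2 : ℝ) • t) + ψ ((2 : ℝ) • t) * c ≤ L t + ψ t * c := by
        rw [hLval, hLval]; exact hsub _ hm2
      have h3 : L (((1:ℝ)/2) • t) + ψ (((1:ℝ)/2) • t) * c ≤ L t + ψ t * c := by
        rw [hLval, hLval]; exact hsub _ hm3
      rw [hhom 2 (by norm_num) t ht, map_smul, smul_eq_mul] at h2
      rw [hhom (1/2) (by norm_num) t ht, map_smul, smul_eq_mul] at h3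
      linarith
    -- ⟨a, s⟩ ≤ ψ s
    have hales : ∀ s ∈ negOrth n, ∑ k, a k * s k ≤ ψ s := by
      intro s hs
      rw [hsum s]
      have h1 : L s + ψ s * c ≤ 0 := by
        have := hsub s hs
        rw [← hLval t, ← hLval s] at this
        linarith
      rw [div_le_iff₀ (by linarith : (0:ℝ) < -c)]
      nlinarith
    -- ⟨a, t⟩ = ψ t
    have haeq : ∑ k, a k * t k = ψ t := by
      rw [hsum t, div_eq_iff (neg_ne_zero.mpr hcne)]
      linear_combination hkey
    -- a nonneg
    have hanonneg : ∀ k, 0 ≤ a k := by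
      intro k
      set s : Fin n → ℝ := t - Pi.single k 1 with hsdef
      have hs : s ∈ negOrth n := by
        intro j
        simp only [hsdef, Pi.sub_apply]
        rcases eq_or_ne j k with rfl | hjk
        · simp only [Pi.single_eq_same]; linarith [ht j]
        · simp only [Pi.single_eq_of_ne hjk]; linarith [ht j]
      have hle : ψ s ≤ ψ t := hmono s hs t ht (by
        intro j
        simp only [hsdef, Pi.sub_apply]
        rcases eq_or_ne j k with rfl | hjk
        · simp [Pi.single_eq_same]
        · simp [Pi.single_eq_of_ne hjk])
      have h1 : ∑ j, a j * s j ≤ ψ s := hales s hs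
      have h2 : ∑ j, a j * s j = L s / (-c) := hsum s
      have h3 : L s = L t - L (Pi.single k 1) := by
        rw [hsdef, map_sub]
      have h4 : (L t - L (Pi.single k 1)) / (-c) ≤ ψ t := by
        rw [← h3, ← h2]; exact h1.trans hle
      have h5 : ψ t = L t / (-c) := by
        rw [eq_div_iff (neg_ne_zero.mpr hcne)]
        linear_combination -hkey
      have hnc : (0:ℝ) < -c := by linarith
      rw [h5] at h4
      have h6 : L t - L (Pi.single k 1) ≤ L t := (div_le_div_iff_of_pos_right hnc).mp h4
      have h7 : 0 ≤ L (Pi.single k 1) := by linarith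
      exact div_nonneg h7 hnc.le
    -- conclude
    have hamem : a ∈ B := ⟨hanonneg, hales⟩
    set T : Set ℝ := {s : ℝ | ∃ a' ∈ B, s = ∑ k, a' k * t k} with hT
    have hmemT : ψ t ∈ T := ⟨a, hamem, haeq.symm⟩
    have hub : ∀ s ∈ T, s ≤ ψ t := by
      rintro s ⟨a', ha', rfl⟩
      exact ha'.2 t ht
    exact le_antisymm (le_csSup ⟨ψ t, hub⟩ hmemT) (csSup_le ⟨ψ t, hmemT⟩ hub)
end
end
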